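/- Let H be a separable Hilbert space, F a closed subspace with orthogonal projection P, and μ* a Borel probability measure on H with finite first moment. Then the pushforward measure P_#μ* minimizes the 1-Wasserstein distance W(μ, μ*) over all Borel probability measures μ supported on F (with finite first moment). -/

import Mathlib

/-! Coupling each `y` with its best approximation `P y ∈ F` costs `∫ ‖P y - y‖ dμ*(y)`. Any other
coupling `γ` of `μ` and `μ*` puts its first coordinate in `F` almost surely, so its integrand
`‖x - y‖` dominates `‖P y - y‖` pointwise, and integrating in `y` gives the same bound. -/

open MeasureTheory ENNReal

/-- The 1-Wasserstein distance (as an `ℝ≥0∞`-valued infimum over couplings) between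
two Borel measures on a normed space. -/
noncomputable def wasserstein1 {H : Type*} [NormedAddCommGroup H] [MeasurableSpace H]
    (μ ν : Measure H) : ℝ≥0∞ :=
  ⨅ (γ : Measure (H × H)) (_ : γ.map Prod.fst = μ) (_ : γ.map Prod.snd = ν),
    ∫⁻ p, ‖p.1 - p.2‖₊ ∂γ

section Wasserstein

variable {H : Type*} [NormedAddCommGroup H] [MeasurableSpace H]

theorem wasserstein1_le_lintegral {μ ν : Measure H} (γ : Measure (H × H))
    (hγ₁ : γ.map Prod.fst = μ) (hγ₂ : γ.map Prod.snd = ν) :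
    wasserstein1 μ ν ≤ ∫⁻ p, ‖p.1 - p.2‖₊ ∂γ :=
  iInf₂_le_of_le γ hγ₁ (iInf_le _ hγ₂)

theorem wasserstein1_map_le_lintegral {f : H → H} (hf : Measurable f) (ν : Measure H) :
    wasserstein1 (ν.map f) ν ≤ ∫⁻ y, ‖f y - y‖₊ ∂ν := by
  have hgraph : Measurable fun y => (f y, y) := hf.prodMk measurable_id
  calc wasserstein1 (ν.map f) ν
      ≤ ∫⁻ p, ‖p.1 - p.2‖₊ ∂ν.map fun y => (f y, y) := by
        refine wasserstein1_le_lintegral _ ?_ ?_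
        · rw [Measure.map_map measurable_fst hgraph]; rfl
        · rw [Measure.map_map measurable_snd hgraph]; exact Measure.map_id
    _ ≤ ∫⁻ y, ‖f y - y‖₊ ∂ν := lintegral_map_le _ _

theorem wasserstein1_map_le_of_forall_norm_sub_le [BorelSpace H] {f : H → H}
    (hf : Continuous f) {S : Set H} (hfS : ∀ x ∈ S, ∀ y, ‖f y - y‖ ≤ ‖x - y‖)
    {μ : Measure H} (hμ : ∀ᵐ x ∂μ, x ∈ S) (ν : Measure H) :
    wasserstein1 (ν.map f) ν ≤ wasserstein1 μ ν := by
  refine le_iInf fun γ => le_iInf fun hγ₁ => le_iInf fun hγ₂ => ?_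
  have hcost : Measurable fun y => (‖f y - y‖₊ : ℝ≥0∞) :=
    (ENNReal.continuous_coe.comp (hf.sub continuous_id).nnnorm).measurable
  have hγS : ∀ᵐ p ∂γ, p.1 ∈ S :=
    ae_of_ae_map measurable_fst.aemeasurable (hγ₁ ▸ hμ)
  calc wasserstein1 (ν.map f) ν
      ≤ ∫⁻ y, ‖f y - y‖₊ ∂ν := wasserstein1_map_le_lintegral hf.measurable ν
    _ = ∫⁻ p, ‖f p.2 - p.2‖₊ ∂γ := by rw [← hγ₂, lintegral_map hcost measurable_snd]
    _ ≤ ∫⁻ p, ‖p.1 - p.2‖₊ ∂γ := lintegral_mono_ae <| hγS.mono fun p hp => by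
        gcongr
        exact_mod_cast hfS p.1 hp p.2

end Wasserstein

theorem Submodule.norm_starProjection_sub_le {𝕜 E : Type*} [RCLike 𝕜] [NormedAddCommGroup E]
    [InnerProductSpace 𝕜 E] (K : Submodule 𝕜 E) [K.HasOrthogonalProjection] {x : E} (hx : x ∈ K)
    (y : E) : ‖K.starProjection y - y‖ ≤ ‖x - y‖ := by
  rw [norm_sub_rev, K.starProjection_minimal, norm_sub_rev]
  exact ciInf_le ⟨0, Set.forall_mem_range.mpr fun _ => norm_nonneg _⟩ (⟨x, hx⟩ : K)

theorem pushforward_projection_minimizes_wasserstein_general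
    {H : Type*} [NormedAddCommGroup H] [InnerProductSpace ℝ H]
    [MeasurableSpace H] [BorelSpace H]
    (F : Submodule ℝ H) [CompleteSpace F]
    (μstar : Measure H)
    (μ : Measure H) [IsProbabilityMeasure μ]
    (hsupp : μ (F : Set H) = 1) :
    wasserstein1 (μstar.map (fun u => (F.orthogonalProjection u : H))) μstar ≤
      wasserstein1 μ μstar := by
  have hF : IsClosed (F : Set H) := (completeSpace_coe_iff_isComplete.mp ‹_›).isClosed
  have hμF : ∀ᵐ x ∂μ, x ∈ (F : Set H) := (mem_ae_iff_prob_eq_one hF.measurableSet).mpr hsupp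
  exact wasserstein1_map_le_of_forall_norm_sub_le F.starProjection.continuous
    (fun x hx y => F.norm_starProjection_sub_le hx y) hμF μstar

theorem pushforward_projection_minimizes_wasserstein
    {H : Type*} [NormedAddCommGroup H] [InnerProductSpace ℝ H]
    [MeasurableSpace H] [BorelSpace H] [SecondCountableTopology H]
    (F : Submodule ℝ H) [CompleteSpace F]
    (μstar : Measure H) [IsProbabilityMeasure μstar]
    (hmom : ∫⁻ u, ‖u‖₊ ∂μstar ≠ ⊤)
    (μ : Measure H) [IsProbabilityMeasure μ]
    (hsupp : μ (F : Set H) = 1)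
    (hμmom : ∫⁻ u, ‖u‖₊ ∂μ ≠ ⊤) :
    wasserstein1 (μstar.map (fun u => (F.orthogonalProjection u : H))) μstar ≤
      wasserstein1 μ μstar :=
  pushforward_projection_minimizes_wasserstein_general F μstar μ hsupp
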